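/- arXiv:1009.4501 — 2 statements merged into one kernel-verified Lean document; each statement's English description precedes it below -/
import Mathlib

section
/- Let F₁(y) = (1 + |y|/2) y/|y| for 0 < |y| < 2, the map blowing up the origin to the unit ball while fixing the sphere |y| = 2. Then F₁ is a bijection from {0 < |y| < 2} onto the annulus {1 < |x| < 2}, and for every x with 1 < |x| < 2, the push-forward of the identity medium satisfies ((F₁)_*I)(x) = [DF₁ (DF₁)ᵀ / det DF₁]|_{y=F₁⁻¹(x)} = (2(|x| − 1)²/|x|²) x̂x̂ᵀ + 2(I − x̂x̂ᵀ), where x̂ = x/|x|. In particular the radial eigenvalue 2(|x| − 1)²/|x|² of the cloaking medium tends to 0 as |x| → 1⁺, so the ideal cloaking medium is singular at the cloaking interface |x| = 1. -/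
/-- The Euclidean norm on `Fin 3 → ℝ`. -/
noncomputable def enorm3 (x : Fin 3 → ℝ) : ℝ := Real.sqrt (x 0 ^ 2 + x 1 ^ 2 + x 2 ^ 2)

/-- The Jacobian matrix of a map `F : ℝ³ → ℝ³` at a point `y`. -/
noncomputable def jac (F : (Fin 3 → ℝ) → (Fin 3 → ℝ)) (y : Fin 3 → ℝ) :
    Matrix (Fin 3) (Fin 3) ℝ :=
  Matrix.of fun i j => fderiv ℝ F y (Pi.single j 1) i

/-- The singular ideal-cloak transformation `F₁(y) = (1 + |y|/2) y/|y|`. -/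
noncomputable def F1 (y : Fin 3 → ℝ) : Fin 3 → ℝ :=
  ((1 + enorm3 y / 2) / enorm3 y) • y

/-!
`F₁` is radial: `F₁ y = (1/2 + 1/|y|) • y`, so it keeps the direction `ŷ = y/|y|` and sends the
radius `r` to `1 + r/2`, which gives the bijection. Differentiating, with `P = ŷŷᵀ`,
`DF₁ = (1/2) P + (1/2 + 1/r) (I - P)`. For any `M = α P + β (I - P)` one has
`M Mᵀ = α² P + β² (I - P)` and `det M = α β²`, so `M Mᵀ / det M = (α/β²) P + α⁻¹ (I - P)`.
With `α = 1/2` the tangential eigenvalue is `2`, and since `|x| = 1 + r/2` the radial one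
`α/β² = 2r²/(r+2)²` equals `2(|x| - 1)²/|x|²`.
-/

open Matrix Filter Topology

section Projection

variable {n : Type*} [Fintype n] {v : n → ℝ}

theorem vecMulVec_self_mul_self (hv : v ⬝ᵥ v = 1) :
    vecMulVec v v * vecMulVec v v = vecMulVec v v := by
  rw [vecMulVec_mul_vecMulVec, hv, one_smul]

variable [DecidableEq n]

theorem det_smul_vecMulVec_add_smul_one_sub (hv : v ⬝ᵥ v = 1) (α : ℝ) {β : ℝ} (hβ : β ≠ 0) :
    (α • vecMulVec v v + β • (1 - vecMulVec v v)).det = α * β ^ (Fintype.card n - 1) := by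
  have hsplit : α • vecMulVec v v + β • (1 - vecMulVec v v)
      = β • (1 + vecMulVec (β⁻¹ • (α - β) • v) v) := by
    rw [smul_vecMulVec, smul_vecMulVec, smul_smul, smul_add, smul_smul,
      mul_inv_cancel_left₀ hβ]
    module
  have hn : Fintype.card n ≠ 0 := by
    intro h
    rw [Fintype.card_eq_zero_iff] at h
    simp [dotProduct, Finset.univ_eq_empty] at hv
  obtain ⟨k, hk⟩ := Nat.exists_eq_succ_of_ne_zero hn
  rw [hsplit, det_smul, vecMulVec_eq Unit, det_one_add_replicateCol_mul_replicateRow,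
    dotProduct_smul, dotProduct_smul, hv, hk, pow_succ]
  simp only [smul_eq_mul, mul_one, Nat.succ_eq_add_one, add_tsub_cancel_right]
  field_simp
  ring

theorem mul_transpose_smul_vecMulVec_add_smul_one_sub (hv : v ⬝ᵥ v = 1) (α β : ℝ) :
    (α • vecMulVec v v + β • (1 - vecMulVec v v)) *
        (α • vecMulVec v v + β • (1 - vecMulVec v v))ᵀ =
      (α ^ 2) • vecMulVec v v + (β ^ 2) • (1 - vecMulVec v v) := by
  simp only [transpose_add, transpose_smul, transpose_sub, transpose_one, transpose_vecMulVec,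
    Matrix.add_mul, Matrix.mul_add, Matrix.smul_mul, Matrix.mul_smul, Matrix.sub_mul,
    Matrix.mul_sub, Matrix.one_mul, Matrix.mul_one, vecMulVec_self_mul_self hv]
  module

end Projection

/-- The medium `M Mᵀ / det M` obtained by pushing the identity medium forward along a map with
Jacobian matrix `M`. -/
noncomputable def pushforwardIdentity {n : Type*} [Fintype n] [DecidableEq n]
    (M : Matrix n n ℝ) : Matrix n n ℝ :=
  (M.det)⁻¹ • (M * Mᵀ)

theorem pushforwardIdentity_smul_vecMulVec_add_smul_one_sub {v : Fin 3 → ℝ} (hv : v ⬝ᵥ v = 1)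
    {α β : ℝ} (hα : α ≠ 0) (hβ : β ≠ 0) :
    pushforwardIdentity (α • vecMulVec v v + β • (1 - vecMulVec v v)) =
      (α / β ^ 2) • vecMulVec v v + α⁻¹ • (1 - vecMulVec v v) := by
  rw [pushforwardIdentity, det_smul_vecMulVec_add_smul_one_sub hv α hβ,
    mul_transpose_smul_vecMulVec_add_smul_one_sub hv, Fintype.card_fin, smul_add, smul_smul,
    smul_smul]
  congr 2 <;> field_simp

theorem enorm3_eq_norm (x : Fin 3 → ℝ) : enorm3 x = ‖WithLp.toLp 2 x‖ := by
  rw [EuclideanSpace.norm_eq, Fin.sum_univ_three]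
  simp [enorm3, sq_abs]

theorem enorm3_nonneg (x : Fin 3 → ℝ) : 0 ≤ enorm3 x := Real.sqrt_nonneg _

theorem enorm3_pos (x : Fin 3 → ℝ) : 0 < enorm3 x ↔ x ≠ 0 := by
  simp [enorm3_eq_norm]

theorem enorm3_smul (c : ℝ) (x : Fin 3 → ℝ) : enorm3 (c • x) = |c| * enorm3 x := by
  simp [enorm3_eq_norm, norm_smul]

theorem enorm3_sq (x : Fin 3 → ℝ) : enorm3 x ^ 2 = x ⬝ᵥ x := by
  rw [enorm3, Real.sq_sqrt (by positivity), dotProduct, Fin.sum_univ_three]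
  ring

/-- The unit vector `x̂ = x / |x|` (and `0` at `x = 0`). -/
noncomputable def direction (x : Fin 3 → ℝ) : Fin 3 → ℝ := (enorm3 x)⁻¹ • x

theorem direction_dotProduct_self {x : Fin 3 → ℝ} (hx : x ≠ 0) :
    direction x ⬝ᵥ direction x = 1 := by
  have hr := ((enorm3_pos x).2 hx).ne'
  rw [direction, dotProduct_smul, smul_dotProduct, ← enorm3_sq, smul_eq_mul, smul_eq_mul]
  field_simp

theorem enorm3_direction {x : Fin 3 → ℝ} (hx : x ≠ 0) : enorm3 (direction x) = 1 := by
  have hr := (enorm3_pos x).2 hx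
  rw [direction, enorm3_smul, abs_of_pos (inv_pos.2 hr), inv_mul_cancel₀ hr.ne']

theorem direction_smul {c : ℝ} (hc : 0 < c) (x : Fin 3 → ℝ) :
    direction (c • x) = direction x := by
  rw [direction, direction, enorm3_smul, abs_of_pos hc, smul_smul, _root_.mul_inv_rev,
    inv_mul_cancel_right₀ hc.ne']

theorem direction_direction (x : Fin 3 → ℝ) : direction (direction x) = direction x := by
  rcases eq_or_ne x 0 with rfl | hx
  · simp [direction]
  · exact direction_smul (inv_pos.2 ((enorm3_pos x).2 hx)) x

theorem enorm3_smul_direction (x : Fin 3 → ℝ) : enorm3 x • direction x = x := by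
  rcases eq_or_ne x 0 with rfl | hx
  · simp [direction]
  · rw [direction, smul_smul, mul_inv_cancel₀ ((enorm3_pos x).2 hx).ne', one_smul]

theorem eq_of_enorm3_eq_of_direction_eq {x y : Fin 3 → ℝ} (hn : enorm3 x = enorm3 y)
    (hd : direction x = direction y) : x = y := by
  rw [← enorm3_smul_direction x, ← enorm3_smul_direction y, hn, hd]

theorem F1_eq_smul (y : Fin 3 → ℝ) : F1 y = (2⁻¹ + (enorm3 y)⁻¹) • y := by
  rcases eq_or_ne y 0 with rfl | hy
  · simp [F1]
  · have := ((enorm3_pos y).2 hy).ne'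
    rw [F1]
    congr 1
    field_simp
    ring

theorem direction_F1 (y : Fin 3 → ℝ) : direction (F1 y) = direction y := by
  rw [F1_eq_smul]
  exact direction_smul (add_pos_of_pos_of_nonneg (by norm_num) (inv_nonneg.2 (enorm3_nonneg y))) y

theorem enorm3_F1 {y : Fin 3 → ℝ} (hy : y ≠ 0) : enorm3 (F1 y) = 1 + enorm3 y / 2 := by
  have hr := (enorm3_pos y).2 hy
  rw [F1_eq_smul, enorm3_smul, abs_of_pos (by positivity)]
  field_simp
  ring

theorem bijOn_F1 :
    Set.BijOn F1 {y : Fin 3 → ℝ | 0 < enorm3 y ∧ enorm3 y < 2}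
      {x : Fin 3 → ℝ | 1 < enorm3 x ∧ enorm3 x < 2} := by
  refine ⟨?_, ?_, ?_⟩
  · rintro y ⟨hy0, hy2⟩
    have := enorm3_F1 ((enorm3_pos y).1 hy0)
    exact ⟨by linarith, by linarith⟩
  · rintro y ⟨hy0, -⟩ z ⟨hz0, -⟩ hyz
    have hn := congrArg enorm3 hyz
    rw [enorm3_F1 ((enorm3_pos y).1 hy0), enorm3_F1 ((enorm3_pos z).1 hz0)] at hn
    have hd := congrArg direction hyz
    rw [direction_F1, direction_F1] at hd
    exact eq_of_enorm3_eq_of_direction_eq (by linarith) hd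
  · rintro x ⟨hx1, hx2⟩
    have hx : x ≠ 0 := (enorm3_pos x).1 (by linarith)
    have hy : enorm3 ((2 * (enorm3 x - 1)) • direction x) = 2 * (enorm3 x - 1) := by
      rw [enorm3_smul, enorm3_direction hx, mul_one, abs_of_pos (by linarith)]
    have hy0 : (2 * (enorm3 x - 1)) • direction x ≠ 0 := (enorm3_pos _).1 (by linarith)
    refine ⟨(2 * (enorm3 x - 1)) • direction x, ⟨by linarith, by linarith⟩, ?_⟩
    refine eq_of_enorm3_eq_of_direction_eq ?_ ?_
    · rw [enorm3_F1 hy0, hy]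
      ring
    · rw [direction_F1, direction_smul (by linarith), direction_direction]

theorem hasFDerivAt_enorm3 {y : Fin 3 → ℝ} (hy : y ≠ 0) :
    HasFDerivAt enorm3 ((enorm3 y)⁻¹ • (innerSL ℝ (WithLp.toLp 2 y)).comp
      (EuclideanSpace.equiv (Fin 3) ℝ).symm.toContinuousLinearMap) y := by
  have hsq := (EuclideanSpace.equiv (Fin 3) ℝ).symm.hasFDerivAt (x := y) |>.norm_sq
  have := hsq.sqrt (by simpa [← enorm3_eq_norm] using (enorm3_pos y).2 hy |>.ne')
  simp only [Real.sqrt_sq (norm_nonneg _)] at this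
  rw [funext enorm3_eq_norm]
  refine this.congr_fderiv ?_
  ext v
  simp only [PiLp.continuousLinearEquiv_symm_apply, one_div, _root_.mul_inv_rev, _root_.smul_apply,
    ContinuousLinearMap.comp_apply, ContinuousLinearEquiv.coe_coe, coe_innerSL_apply, nsmul_eq_mul,
    Nat.cast_ofNat, smul_eq_mul]
  ring

theorem hasFDerivAt_F1 {y : Fin 3 → ℝ} (hy : y ≠ 0) :
    HasFDerivAt F1 (toLin' ((2⁻¹ : ℝ) • vecMulVec (direction y) (direction y) +
      (2⁻¹ + (enorm3 y)⁻¹) • (1 - vecMulVec (direction y) (direction y)))).toContinuousLinearMap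
      y := by
  have hr := (enorm3_pos y).2 hy
  have := (((hasDerivAt_inv hr.ne').comp_hasFDerivAt y (hasFDerivAt_enorm3 hy)).const_add
    2⁻¹).smul (hasFDerivAt_id y)
  rw [funext F1_eq_smul]
  refine this.congr_fderiv ?_
  ext v i
  simp [direction, mulVec, dotProduct, Fin.sum_univ_three, vecMulVec_apply, PiLp.inner_apply]
  field_simp
  ring

theorem jac_eq_toMatrix' {F : (Fin 3 → ℝ) → Fin 3 → ℝ} {F' : (Fin 3 → ℝ) →L[ℝ] Fin 3 → ℝ}
    {y : Fin 3 → ℝ} (h : HasFDerivAt F F' y) :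
    jac F y = LinearMap.toMatrix' (F' : (Fin 3 → ℝ) →ₗ[ℝ] Fin 3 → ℝ) := by
  ext i j
  simp [jac, h.fderiv, LinearMap.toMatrix'_apply]

theorem jac_F1 {y : Fin 3 → ℝ} (hy : y ≠ 0) :
    jac F1 y = (2⁻¹ : ℝ) • vecMulVec (direction y) (direction y) +
      (2⁻¹ + (enorm3 y)⁻¹) • (1 - vecMulVec (direction y) (direction y)) := by
  rw [jac_eq_toMatrix' (hasFDerivAt_F1 hy), LinearMap.coe_toContinuousLinearMap,
    LinearMap.toMatrix'_toLin']

theorem tendsto_radial_eigenvalue_nhdsGT_one :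
    Tendsto (fun r : ℝ => 2 * (r - 1) ^ 2 / r ^ 2) (𝓝[>] 1) (𝓝 0) := by
  have hc : ContinuousAt (fun r : ℝ => 2 * (r - 1) ^ 2 / r ^ 2) 1 := by
    fun_prop (disch := norm_num)
  simpa using hc.tendsto.mono_left nhdsWithin_le_nhds

/-- `F₁(y) = (1 + |y|/2)y/|y|` is a bijection of `{0 < |y| < 2}` onto
the annulus `{1 < |x| < 2}`, and the push-forward of the identity medium satisfies
`((F₁)_*I)(x) = (2(|x|−1)²/|x|²) x̂x̂ᵀ + 2(I − x̂x̂ᵀ)`; in particular the radial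
eigenvalue `2(|x|−1)²/|x|²` tends to `0` as `|x| → 1⁺`, so the ideal cloaking medium is
singular at the cloaking interface. -/
theorem ideal_cloak_medium :
    Set.BijOn F1 {y : Fin 3 → ℝ | 0 < enorm3 y ∧ enorm3 y < 2}
      {x : Fin 3 → ℝ | 1 < enorm3 x ∧ enorm3 x < 2} ∧
    (∀ y : Fin 3 → ℝ, 0 < enorm3 y → enorm3 y < 2 →
      ((jac F1 y).det)⁻¹ • (jac F1 y * (jac F1 y).transpose) =
        (2 * (enorm3 (F1 y) - 1) ^ 2 / (enorm3 (F1 y)) ^ 2) •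
          Matrix.vecMulVec ((enorm3 (F1 y))⁻¹ • F1 y) ((enorm3 (F1 y))⁻¹ • F1 y) +
        (2 : ℝ) • (1 - Matrix.vecMulVec ((enorm3 (F1 y))⁻¹ • F1 y)
          ((enorm3 (F1 y))⁻¹ • F1 y))) ∧
    Filter.Tendsto (fun r : ℝ => 2 * (r - 1) ^ 2 / r ^ 2)
      (nhdsWithin 1 (Set.Ioi 1)) (nhds 0) := by
  refine ⟨bijOn_F1, fun y hr _ => ?_, tendsto_radial_eigenvalue_nhdsGT_one⟩
  have hy : y ≠ 0 := (enorm3_pos y).1 hr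
  have hβ : (2⁻¹ + (enorm3 y)⁻¹ : ℝ) ≠ 0 := by positivity
  change pushforwardIdentity (jac F1 y) =
    _ • vecMulVec (direction (F1 y)) (direction (F1 y)) +
      (2 : ℝ) • (1 - vecMulVec (direction (F1 y)) (direction (F1 y)))
  rw [jac_F1 hy, direction_F1, enorm3_F1 hy,
    pushforwardIdentity_smul_vecMulVec_add_smul_one_sub (direction_dotProduct_self hy)
      (by norm_num) hβ]
  congr 2
  · field_simp
    ring
  · norm_num
end

section
/- Fix ω > 0, ε₀ > 0, μ₀ > 0, an integer n ≥ 1, and set k = (ε₀μ₀)^{1/2}; assume j_n(kω) ≠ 0. For ρ ∈ (0,1) define t₁′(ρ) = [h_n(kω)𝒥_n(kω) − 𝓗_n(kω)j_n(kω)] / [μ₀^{−1/2} ρ h_n(ωρ) 𝒥_n(kω) − ε₀^{−1/2} k 𝓗_n(ωρ) j_n(kω)], t₂′(ρ) = [ε₀^{−1/2} k h_n(kω) 𝓗_n(ωρ) − μ₀^{−1/2} ρ 𝓗_n(kω) h_n(ωρ)] / [μ₀^{−1/2} ρ h_n(ωρ) 𝒥_n(kω) − ε₀^{−1/2} k 𝓗_n(ωρ)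 j_n(kω)], t₃′(ρ) = [𝒥_n(kω)h_n(kω) − 𝓗_n(kω)j_n(kω)] / [ε₀^{−1/2} ρ h_n(ωρ) 𝒥_n(kω) − μ₀^{−1/2} k 𝓗_n(ωρ) j_n(kω)], and t₄′(ρ) = [μ₀^{−1/2} k h_n(kω) 𝓗_n(ωρ) − ε₀^{−1/2} ρ 𝓗_n(kω) h_n(ωρ)] / [ε₀^{−1/2} ρ h_n(ωρ) 𝒥_n(kω) − μ₀^{−1/2} k 𝓗_n(ωρ) j_n(kω)]. Then as ρ → 0⁺: t₁′(ρ) = O(ρ^{n+1}), t₃′(ρ) = O(ρ^{n+1}), and t₂′(ρ) and t₄′(ρ) are bounded, with lim_{ρ→0⁺} t₂′(ρ) = lim_{ρ→0⁺} t₄′(ρ) = −h_n(kω)/j_n(kω). -/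
/-- The operator `f ↦ (z ↦ f′(z)/z)` used in the Rayleigh formulas. -/
noncomputable def sphDOp (f : ℂ → ℂ) : ℂ → ℂ := fun z => deriv f z / z

/-- Spherical Bessel function of the first kind:
`j_n(z) = (−z)^n (z⁻¹ d/dz)^n (sin z / z)`. -/
noncomputable def sbj (n : ℕ) (z : ℂ) : ℂ :=
  (-z) ^ n * sphDOp^[n] (fun w => Complex.sin w / w) z

/-- Spherical Bessel function of the second kind:
`y_n(z) = −(−z)^n (z⁻¹ d/dz)^n (cos z / z)`. -/
noncomputable def sby (n : ℕ) (z : ℂ) : ℂ :=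
  -((-z) ^ n * sphDOp^[n] (fun w => Complex.cos w / w) z)

/-- Spherical Hankel function of the first kind `h_n = j_n + i y_n`. -/
noncomputable def sbh (n : ℕ) (z : ℂ) : ℂ := sbj n z + Complex.I * sby n z

/-- `𝒥_n(z) = j_n(z) + z j_n′(z)`. -/
noncomputable def sbJ (n : ℕ) (z : ℂ) : ℂ := sbj n z + z * deriv (sbj n) z

/-- `𝓗_n(z) = h_n(z) + z h_n′(z)`. -/
noncomputable def sbH (n : ℕ) (z : ℂ) : ℂ := sbh n z + z * deriv (sbh n) z

/-- `x^{−1/2}` for a positive real `x`, as a complex number. -/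
noncomputable def invSqrtC (x : ℝ) : ℂ := ((Real.sqrt x)⁻¹ : ℝ)

/-- `g(ρ) = O(ρ^s)` as `ρ → 0⁺`. -/
def IsBigORho (g : ℝ → ℂ) (s : ℝ) : Prop :=
  ∃ C : ℝ, 0 < C ∧ ∃ δ : ℝ, 0 < δ ∧
    ∀ ρ : ℝ, 0 < ρ → ρ < δ → ‖g ρ‖ ≤ C * ρ ^ s

/-- The source transmission ratio `t₁′(ρ)`. -/
noncomputable def t1' (n : ℕ) (ω ε₀ μ₀ k ρ : ℝ) : ℂ :=
  (sbh n ((k * ω : ℝ) : ℂ) * sbJ n ((k * ω : ℝ) : ℂ)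
      - sbH n ((k * ω : ℝ) : ℂ) * sbj n ((k * ω : ℝ) : ℂ)) /
  (invSqrtC μ₀ * (ρ : ℂ) * sbh n ((ω * ρ : ℝ) : ℂ) * sbJ n ((k * ω : ℝ) : ℂ)
      - invSqrtC ε₀ * (k : ℂ) * sbH n ((ω * ρ : ℝ) : ℂ) * sbj n ((k * ω : ℝ) : ℂ))

/-- The source transmission ratio `t₂′(ρ)`. -/
noncomputable def t2' (n : ℕ) (ω ε₀ μ₀ k ρ : ℝ) : ℂ :=
  (invSqrtC ε₀ * (k : ℂ) * sbh n ((k * ω : ℝ) : ℂ) * sbH n ((ω * ρ : ℝ) : ℂ)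
      - invSqrtC μ₀ * (ρ : ℂ) * sbH n ((k * ω : ℝ) : ℂ) * sbh n ((ω * ρ : ℝ) : ℂ)) /
  (invSqrtC μ₀ * (ρ : ℂ) * sbh n ((ω * ρ : ℝ) : ℂ) * sbJ n ((k * ω : ℝ) : ℂ)
      - invSqrtC ε₀ * (k : ℂ) * sbH n ((ω * ρ : ℝ) : ℂ) * sbj n ((k * ω : ℝ) : ℂ))

/-- The source transmission ratio `t₃′(ρ)`. -/
noncomputable def t3' (n : ℕ) (ω ε₀ μ₀ k ρ : ℝ) : ℂ :=
  (sbJ n ((k * ω : ℝ) : ℂ) * sbh n ((k * ω : ℝ) : ℂ)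
      - sbH n ((k * ω : ℝ) : ℂ) * sbj n ((k * ω : ℝ) : ℂ)) /
  (invSqrtC ε₀ * (ρ : ℂ) * sbh n ((ω * ρ : ℝ) : ℂ) * sbJ n ((k * ω : ℝ) : ℂ)
      - invSqrtC μ₀ * (k : ℂ) * sbH n ((ω * ρ : ℝ) : ℂ) * sbj n ((k * ω : ℝ) : ℂ))

/-- The source transmission ratio `t₄′(ρ)`. -/
noncomputable def t4' (n : ℕ) (ω ε₀ μ₀ k ρ : ℝ) : ℂ :=
  (invSqrtC μ₀ * (k : ℂ) * sbh n ((k * ω : ℝ) : ℂ) * sbH n ((ω * ρ : ℝ) : ℂ)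
      - invSqrtC ε₀ * (ρ : ℂ) * sbH n ((k * ω : ℝ) : ℂ) * sbh n ((ω * ρ : ℝ) : ℂ)) /
  (invSqrtC ε₀ * (ρ : ℂ) * sbh n ((ω * ρ : ℝ) : ℂ) * sbJ n ((k * ω : ℝ) : ℂ)
      - invSqrtC μ₀ * (k : ℂ) * sbj n ((k * ω : ℝ) : ℂ) * sbH n ((ω * ρ : ℝ) : ℂ))


/-!
By Rayleigh's formula, `z ^ (n + 1) * h_n(z) = (-1) ^ n * g(z)` for an entire function `g`
(a combination of `sin` and `cos` with polynomial coefficients) with `g 0 ≠ 0`, and then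
`z ^ (n + 1) * 𝓗_n(z) = (-1) ^ n * (z g'(z) - n g(z))` tends to `-n (-1) ^ n g(0) ≠ 0` as `z → 0`.
Multiplying numerator and denominator of each `tᵢ′(ρ)` by `(ωρ) ^ (n + 1)`, the denominator tends
to a nonzero multiple of `j_n(kω)` through its `𝓗_n(ωρ)` term, so `t₁′, t₃′` keep the factor
`(ωρ) ^ (n + 1)` and `t₂′, t₄′` tend to the ratio of the `𝓗_n(ωρ)` coefficients, `-h_n(kω)/j_n(kω)`.
-/

open Filter Topology Polynomial

noncomputable def trigPoly (p : ℂ[X] × ℂ[X]) (z : ℂ) : ℂ :=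
  Complex.sin z * p.1.eval z + Complex.cos z * p.2.eval z

noncomputable def trigPolyDeriv (p : ℂ[X] × ℂ[X]) : ℂ[X] × ℂ[X] :=
  (derivative p.1 - p.2, p.1 + derivative p.2)

theorem hasDerivAt_trigPoly (p : ℂ[X] × ℂ[X]) (z : ℂ) :
    HasDerivAt (trigPoly p) (trigPoly (trigPolyDeriv p) z) z := by
  have h : HasDerivAt (trigPoly p) (Complex.cos z * p.1.eval z
      + Complex.sin z * (derivative p.1).eval z
      + (-Complex.sin z * p.2.eval z + Complex.cos z * (derivative p.2).eval z)) z :=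
    ((Complex.hasDerivAt_sin z).mul (p.1.hasDerivAt z)).add
      ((Complex.hasDerivAt_cos z).mul (p.2.hasDerivAt z))
  convert h using 1
  simp only [trigPoly, trigPolyDeriv, eval_add, eval_sub]
  ring

theorem differentiable_trigPoly (p : ℂ[X] × ℂ[X]) : Differentiable ℂ (trigPoly p) :=
  fun z => (hasDerivAt_trigPoly p z).differentiableAt

theorem trigPoly_zero (p : ℂ[X] × ℂ[X]) : trigPoly p 0 = p.2.eval 0 := by
  simp [trigPoly]

theorem hasDerivAt_div_pow {g : ℂ → ℂ} {g' z : ℂ} (hg : HasDerivAt g g' z) (hz : z ≠ 0)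
    (m : ℕ) :
    HasDerivAt (fun w => g w / w ^ (m + 1)) ((z * g' - (m + 1) * g z) / z ^ (m + 2)) z := by
  have hpow : HasDerivAt (fun w : ℂ => w ^ (m + 1)) ((m + 1 : ℂ) * z ^ m) z := by
    simpa using hasDerivAt_pow (m + 1) z
  have h : HasDerivAt (fun w => g w / w ^ (m + 1))
      ((g' * z ^ (m + 1) - g z * ((m + 1) * z ^ m)) / (z ^ (m + 1)) ^ 2) z :=
    hg.div hpow (pow_ne_zero _ hz)
  convert h using 1
  field_simp
  ring

noncomputable def rayleighStep (m : ℕ) (p : ℂ[X] × ℂ[X]) : ℂ[X] × ℂ[X] :=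
  (X * (trigPolyDeriv p).1 - C ((m : ℂ) + 1) * p.1,
    X * (trigPolyDeriv p).2 - C ((m : ℂ) + 1) * p.2)

theorem trigPoly_rayleighStep (m : ℕ) (p : ℂ[X] × ℂ[X]) (z : ℂ) :
    trigPoly (rayleighStep m p) z = z * trigPoly (trigPolyDeriv p) z - (m + 1) * trigPoly p z := by
  simp only [trigPoly, rayleighStep, eval_sub, eval_mul, eval_X, eval_C]
  ring

noncomputable def rayleighSeq (p : ℂ[X] × ℂ[X]) : ℕ → ℂ[X] × ℂ[X]
  | 0 => p
  | n + 1 => rayleighStep (2 * n) (rayleighSeq p n)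

theorem sphDOp_iterate_trigPoly_div (p : ℂ[X] × ℂ[X]) (n : ℕ) {z : ℂ} (hz : z ≠ 0) :
    sphDOp^[n] (fun w => trigPoly p w / w) z
      = trigPoly (rayleighSeq p n) z / z ^ (2 * n + 1) := by
  induction n generalizing z with
  | zero => simp [rayleighSeq]
  | succ n ih =>
    have hev : sphDOp^[n] (fun w => trigPoly p w / w)
        =ᶠ[𝓝 z] fun w => trigPoly (rayleighSeq p n) w / w ^ (2 * n + 1) :=
      eventually_of_mem (isOpen_ne.mem_nhds hz) fun w hw => ih hw
    rw [Function.iterate_succ_apply', sphDOp, hev.deriv_eq,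
      (hasDerivAt_div_pow (hasDerivAt_trigPoly _ z) hz (2 * n)).deriv, rayleighSeq,
      trigPoly_rayleighStep]
    field_simp
    push_cast
    ring

theorem rayleighSeq_snd_eval_zero (p : ℂ[X] × ℂ[X]) (n : ℕ) :
    (rayleighSeq p n).2.eval 0 = (∏ m ∈ Finset.range n, -(2 * (m : ℂ) + 1)) * p.2.eval 0 := by
  induction n with
  | zero => simp [rayleighSeq]
  | succ n ih =>
    simp only [rayleighSeq, rayleighStep, eval_sub, eval_mul, eval_X, eval_C, ih,
      Finset.prod_range_succ]
    push_cast
    ring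

noncomputable def hankelNumerator (n : ℕ) (z : ℂ) : ℂ :=
  trigPoly (rayleighSeq (1, 0) n) z - Complex.I * trigPoly (rayleighSeq (0, 1) n) z

theorem differentiable_hankelNumerator (n : ℕ) : Differentiable ℂ (hankelNumerator n) :=
  (differentiable_trigPoly _).sub ((differentiable_const _).mul (differentiable_trigPoly _))

theorem hankelNumerator_zero_ne_zero (n : ℕ) : hankelNumerator n 0 ≠ 0 := by
  have hprod : (∏ m ∈ Finset.range n, -(2 * (m : ℂ) + 1)) ≠ 0 :=
    Finset.prod_ne_zero_iff.mpr fun m _ => neg_ne_zero.mpr (by exact_mod_cast (2 * m).succ_ne_zero)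
  simpa [hankelNumerator, trigPoly_zero, rayleighSeq_snd_eval_zero] using hprod

theorem sbh_eq_div_pow (n : ℕ) {z : ℂ} (hz : z ≠ 0) :
    sbh n z = (-1) ^ n * hankelNumerator n z / z ^ (n + 1) := by
  have hsin : (fun w => Complex.sin w / w) = fun w => trigPoly (1, 0) w / w := by
    funext w; simp [trigPoly]
  have hcos : (fun w => Complex.cos w / w) = fun w => trigPoly (0, 1) w / w := by
    funext w; simp [trigPoly]
  rw [sbh, sbj, sby, hsin, hcos, sphDOp_iterate_trigPoly_div _ _ hz,
    sphDOp_iterate_trigPoly_div _ _ hz, hankelNumerator, neg_pow]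
  field_simp
  ring

theorem sbH_eq_div_pow (n : ℕ) {z : ℂ} (hz : z ≠ 0) :
    sbH n z = (-1) ^ n * (z * deriv (hankelNumerator n) z - n * hankelNumerator n z)
      / z ^ (n + 1) := by
  have hev : sbh n =ᶠ[𝓝 z] fun w => (-1) ^ n * (hankelNumerator n w / w ^ (n + 1)) :=
    eventually_of_mem (isOpen_ne.mem_nhds hz) fun w hw => by
      rw [sbh_eq_div_pow n hw, mul_div_assoc]
  have hd := (hasDerivAt_div_pow (differentiable_hankelNumerator n z).hasDerivAt hz n).const_mul
    ((-1 : ℂ) ^ n)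
  rw [sbH, sbh_eq_div_pow n hz, hev.deriv_eq, hd.deriv]
  field_simp
  ring

theorem tendsto_pow_mul_of_eq_div_pow {f c : ℂ → ℂ} (m : ℕ) (hc : ContinuousAt c 0)
    (hf : ∀ z, z ≠ 0 → f z = c z / z ^ m) :
    Tendsto (fun z => z ^ m * f z) (𝓝[≠] 0) (𝓝 (c 0)) := by
  refine (hc.tendsto.mono_left nhdsWithin_le_nhds).congr' ?_
  filter_upwards [self_mem_nhdsWithin] with z hz
  rw [hf z hz, mul_div_cancel₀ _ (pow_ne_zero _ hz)]

theorem tendsto_pow_mul_sbh (n : ℕ) :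
    Tendsto (fun z => z ^ (n + 1) * sbh n z) (𝓝[≠] 0) (𝓝 ((-1) ^ n * hankelNumerator n 0)) :=
  tendsto_pow_mul_of_eq_div_pow (n + 1)
    ((differentiable_hankelNumerator n).continuous.const_mul _).continuousAt
    fun _ hz => sbh_eq_div_pow n hz

theorem tendsto_pow_mul_sbH (n : ℕ) :
    Tendsto (fun z => z ^ (n + 1) * sbH n z) (𝓝[≠] 0)
      (𝓝 (-(n * ((-1) ^ n * hankelNumerator n 0)))) := by
  have hc : Continuous fun z =>
      (-1) ^ n * (z * deriv (hankelNumerator n) z - n * hankelNumerator n z) := by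
    have hd := differentiable_hankelNumerator n
    exact continuous_const.mul
      ((continuous_id.mul hd.deriv.continuous).sub (continuous_const.mul hd.continuous))
  convert tendsto_pow_mul_of_eq_div_pow (n + 1) hc.continuousAt
    (fun _ hz => sbH_eq_div_pow n hz) using 2
  ring

theorem exists_forall_norm_le_of_tendsto {E : Type*} [SeminormedAddCommGroup E] {f : ℝ → E}
    {L : E} (hf : Tendsto f (𝓝[>] 0) (𝓝 L)) :
    ∃ C δ : ℝ, 0 < C ∧ 0 < δ ∧ ∀ ρ : ℝ, 0 < ρ → ρ < δ → ‖f ρ‖ ≤ C := by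
  have hev : ∀ᶠ ρ in 𝓝[>] 0, ‖f ρ‖ ≤ ‖L‖ + 1 :=
    (hf.norm.eventually (eventually_lt_nhds (lt_add_one _))).mono fun _ h => h.le
  obtain ⟨δ, hδ, hbound⟩ := (nhdsGT_basis (0 : ℝ)).eventually_iff.mp hev
  exact ⟨‖L‖ + 1, δ, by positivity, hδ, fun ρ hρ hρδ => hbound ⟨hρ, hρδ⟩⟩

theorem isBigORho_of_eq_pow_mul {g q : ℝ → ℂ} {L : ℂ} (m : ℕ)
    (hq : Tendsto q (𝓝[>] 0) (𝓝 L)) (hg : ∀ ρ : ℝ, 0 < ρ → g ρ = (ρ : ℂ) ^ m * q ρ) :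
    IsBigORho g m := by
  obtain ⟨C, δ, hC, hδ, hbound⟩ := exists_forall_norm_le_of_tendsto hq
  refine ⟨C, hC, δ, hδ, fun ρ hρ hρδ => ?_⟩
  rw [hg ρ hρ, norm_mul, norm_pow, Complex.norm_real, Real.norm_of_nonneg hρ.le,
    Real.rpow_natCast, mul_comm C]
  exact mul_le_mul_of_nonneg_left (hbound ρ hρ hρδ) (by positivity)

theorem tendsto_ofReal_mul_nhdsGT_zero {ω : ℝ} (hω : ω ≠ 0) :
    Tendsto (fun ρ : ℝ => ((ω * ρ : ℝ) : ℂ)) (𝓝[>] 0) (𝓝[≠] 0) := by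
  refine tendsto_nhdsWithin_iff.mpr ⟨?_, ?_⟩
  · have h : Continuous fun ρ : ℝ => ((ω * ρ : ℝ) : ℂ) := by fun_prop
    simpa using h.tendsto 0 |>.mono_left nhdsWithin_le_nhds
  · filter_upwards [self_mem_nhdsWithin] with ρ hρ
    simpa using And.intro hω (ne_of_gt hρ)

theorem tendsto_transmission_num_den {u v : ℝ → ℂ} {U V : ℂ} (hu : Tendsto u (𝓝[>] 0) (𝓝 U))
    (hv : Tendsto v (𝓝[>] 0) (𝓝 V)) (a b j J h H : ℂ) :
    Tendsto (fun ρ : ℝ => a * ρ * u ρ * J - b * v ρ * j) (𝓝[>] 0) (𝓝 (-(b * V * j))) ∧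
    Tendsto (fun ρ : ℝ => b * h * v ρ - a * ρ * H * u ρ) (𝓝[>] 0) (𝓝 (b * h * V)) := by
  have hρ : Tendsto (fun ρ : ℝ => (ρ : ℂ)) (𝓝[>] 0) (𝓝 0) :=
    (Complex.continuous_ofReal.tendsto' 0 0 Complex.ofReal_zero).mono_left nhdsWithin_le_nhds
  have hden := (((tendsto_const_nhds (x := a)).mul hρ).mul hu |>.mul
    (tendsto_const_nhds (x := J))).sub (((tendsto_const_nhds (x := b)).mul hv).mul
      (tendsto_const_nhds (x := j)))
  have hnum := ((tendsto_const_nhds (x := b * h)).mul hv).sub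
    ((((tendsto_const_nhds (x := a)).mul hρ).mul (tendsto_const_nhds (x := H))).mul hu)
  rw [mul_zero, zero_mul, zero_mul, zero_sub] at hden
  rw [mul_zero, zero_mul, zero_mul, sub_zero] at hnum
  exact ⟨hden, hnum⟩

theorem transmission_ratio_asymptotics {n : ℕ} (hn : n ≠ 0) {ω : ℝ} (hω : ω ≠ 0) {b j : ℂ}
    (hb : b ≠ 0) (hj : j ≠ 0) (A a J h H : ℂ) :
    IsBigORho (fun ρ => A /
        (a * ρ * sbh n ((ω * ρ : ℝ) : ℂ) * J - b * sbH n ((ω * ρ : ℝ) : ℂ) * j)) ((n : ℝ) + 1) ∧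
    Tendsto (fun ρ : ℝ =>
        (b * h * sbH n ((ω * ρ : ℝ) : ℂ) - a * ρ * H * sbh n ((ω * ρ : ℝ) : ℂ)) /
        (a * ρ * sbh n ((ω * ρ : ℝ) : ℂ) * J - b * sbH n ((ω * ρ : ℝ) : ℂ) * j))
      (𝓝[>] 0) (𝓝 (-h / j)) := by
  set z : ℝ → ℂ := fun ρ => ((ω * ρ : ℝ) : ℂ)
  set D : ℝ → ℂ := fun ρ => a * ρ * sbh n (z ρ) * J - b * sbH n (z ρ) * j
  set N : ℝ → ℂ := fun ρ => b * h * sbH n (z ρ) - a * ρ * H * sbh n (z ρ)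
  set u : ℝ → ℂ := fun ρ => z ρ ^ (n + 1) * sbh n (z ρ)
  set v : ℝ → ℂ := fun ρ => z ρ ^ (n + 1) * sbH n (z ρ)
  set V := -(n * ((-1) ^ n * hankelNumerator n 0))
  have hu : Tendsto u (𝓝[>] 0) (𝓝 ((-1) ^ n * hankelNumerator n 0)) :=
    (tendsto_pow_mul_sbh n).comp (tendsto_ofReal_mul_nhdsGT_zero hω)
  have hv : Tendsto v (𝓝[>] 0) (𝓝 V) :=
    (tendsto_pow_mul_sbH n).comp (tendsto_ofReal_mul_nhdsGT_zero hω)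
  have hV : V ≠ 0 := neg_ne_zero.mpr <| mul_ne_zero (Nat.cast_ne_zero.mpr hn) <|
    mul_ne_zero (pow_ne_zero _ (neg_ne_zero.mpr one_ne_zero)) (hankelNumerator_zero_ne_zero n)
  obtain ⟨hden, hnum⟩ := tendsto_transmission_num_den hu hv a b j J h H
  have hden0 : -(b * V * j) ≠ 0 := neg_ne_zero.mpr (mul_ne_zero (mul_ne_zero hb hV) hj)
  have hz : ∀ ρ : ℝ, 0 < ρ → z ρ ^ (n + 1) ≠ 0 := fun ρ hρ =>
    pow_ne_zero _ (Complex.ofReal_ne_zero.mpr (mul_ne_zero hω hρ.ne'))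
  have hscale_den : ∀ ρ : ℝ, a * ρ * u ρ * J - b * v ρ * j = z ρ ^ (n + 1) * D ρ :=
    fun ρ => by simp only [u, v, D]; ring
  have hscale_num : ∀ ρ : ℝ, b * h * v ρ - a * ρ * H * u ρ = z ρ ^ (n + 1) * N ρ :=
    fun ρ => by simp only [u, v, N]; ring
  constructor
  · rw [← Nat.cast_add_one]
    refine isBigORho_of_eq_pow_mul (n + 1)
      ((tendsto_const_nhds (x := (ω : ℂ) ^ (n + 1) * A)).div hden hden0) fun ρ hρ => ?_
    show A / D ρ = (ρ : ℂ) ^ (n + 1) * ((ω : ℂ) ^ (n + 1) * A / (a * ρ * u ρ * J - b * v ρ * j))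
    rw [hscale_den, ← mul_div_mul_left A (D ρ) (hz ρ hρ), mul_div_assoc']
    congr 1
    simp only [z]
    push_cast
    ring
  · refine ((hnum.div hden hden0).congr' ?_).trans_eq ?_
    · filter_upwards [self_mem_nhdsWithin] with ρ hρ
      show (b * h * v ρ - a * ρ * H * u ρ) / (a * ρ * u ρ * J - b * v ρ * j) = N ρ / D ρ
      rw [hscale_num, hscale_den, mul_div_mul_left _ _ (hz ρ hρ)]
    · field_simp

theorem sbj_zero {n : ℕ} (hn : n ≠ 0) : sbj n 0 = 0 := by
  simp [sbj, hn]

theorem invSqrtC_ne_zero {x : ℝ} (hx : 0 < x) : invSqrtC x ≠ 0 := by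
  simp [invSqrtC, hx.ne', hx.le]

theorem source_transmission_ratios_asymptotics_general
    (ω ε₀ μ₀ : ℝ) (hε : 0 < ε₀) (hμ : 0 < μ₀)
    (n : ℕ) (hn : 1 ≤ n) (k : ℝ)
    (hjk : sbj n ((k * ω : ℝ) : ℂ) ≠ 0) :
    IsBigORho (fun ρ => t1' n ω ε₀ μ₀ k ρ) ((n : ℝ) + 1) ∧
    IsBigORho (fun ρ => t3' n ω ε₀ μ₀ k ρ) ((n : ℝ) + 1) ∧
    (∃ C δ : ℝ, 0 < C ∧ 0 < δ ∧ ∀ ρ : ℝ, 0 < ρ → ρ < δ →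
      ‖t2' n ω ε₀ μ₀ k ρ‖ ≤ C ∧ ‖t4' n ω ε₀ μ₀ k ρ‖ ≤ C) ∧
    Filter.Tendsto (fun ρ : ℝ => t2' n ω ε₀ μ₀ k ρ) (nhdsWithin 0 (Set.Ioi 0))
      (nhds (-(sbh n ((k * ω : ℝ) : ℂ)) / sbj n ((k * ω : ℝ) : ℂ))) ∧
    Filter.Tendsto (fun ρ : ℝ => t4' n ω ε₀ μ₀ k ρ) (nhdsWithin 0 (Set.Ioi 0))
      (nhds (-(sbh n ((k * ω : ℝ) : ℂ)) / sbj n ((k * ω : ℝ) : ℂ))) := by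
  have hn0 : n ≠ 0 := by omega
  obtain ⟨hk, hω⟩ : k ≠ 0 ∧ ω ≠ 0 := mul_ne_zero_iff.mp fun hkω =>
    hjk (by rw [hkω, Complex.ofReal_zero, sbj_zero hn0])
  have hb {x : ℝ} (hx : 0 < x) : invSqrtC x * k ≠ 0 :=
    mul_ne_zero (invSqrtC_ne_zero hx) (Complex.ofReal_ne_zero.mpr hk)
  obtain ⟨ht1, ht2⟩ := transmission_ratio_asymptotics hn0 hω (hb hε) hjk
    (sbh n ((k * ω : ℝ) : ℂ) * sbJ n ((k * ω : ℝ) : ℂ)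
      - sbH n ((k * ω : ℝ) : ℂ) * sbj n ((k * ω : ℝ) : ℂ))
    (invSqrtC μ₀) (sbJ n ((k * ω : ℝ) : ℂ)) (sbh n ((k * ω : ℝ) : ℂ)) (sbH n ((k * ω : ℝ) : ℂ))
  obtain ⟨ht3, ht4⟩ := transmission_ratio_asymptotics hn0 hω (hb hμ) hjk
    (sbJ n ((k * ω : ℝ) : ℂ) * sbh n ((k * ω : ℝ) : ℂ)
      - sbH n ((k * ω : ℝ) : ℂ) * sbj n ((k * ω : ℝ) : ℂ))
    (invSqrtC ε₀) (sbJ n ((k * ω : ℝ) : ℂ)) (sbh n ((k * ω : ℝ) : ℂ)) (sbH n ((k * ω : ℝ) : ℂ))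
  replace ht4 : Tendsto (fun ρ : ℝ => t4' n ω ε₀ μ₀ k ρ) (𝓝[>] 0) _ :=
    ht4.congr fun ρ => by simp only [t4']; ring
  obtain ⟨C, δ, hC, hδ, hbound⟩ := exists_forall_norm_le_of_tendsto (ht2.prodMk_nhds ht4)
  exact ⟨ht1, ht3, ⟨C, δ, hC, hδ, fun ρ hρ hρδ => norm_prod_le_iff.mp (hbound ρ hρ hρδ)⟩,
    ht2, ht4⟩

/-- Asymptotics of the source transmission ratios:
`t₁′(ρ) = O(ρ^{n+1})`, `t₃′(ρ) = O(ρ^{n+1})`, while `t₂′(ρ)` and `t₄′(ρ)` are bounded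
with `t₂′(ρ), t₄′(ρ) → −h_n(kω)/j_n(kω)` as `ρ → 0⁺`. -/
theorem source_transmission_ratios_asymptotics
    (ω ε₀ μ₀ : ℝ) (hω : 0 < ω) (hε : 0 < ε₀) (hμ : 0 < μ₀)
    (n : ℕ) (hn : 1 ≤ n) (k : ℝ) (hk : k = Real.sqrt (ε₀ * μ₀))
    (hjk : sbj n ((k * ω : ℝ) : ℂ) ≠ 0) :
    IsBigORho (fun ρ => t1' n ω ε₀ μ₀ k ρ) ((n : ℝ) + 1) ∧
    IsBigORho (fun ρ => t3' n ω ε₀ μ₀ k ρ) ((n : ℝ) + 1) ∧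
    (∃ C δ : ℝ, 0 < C ∧ 0 < δ ∧ ∀ ρ : ℝ, 0 < ρ → ρ < δ →
      ‖t2' n ω ε₀ μ₀ k ρ‖ ≤ C ∧ ‖t4' n ω ε₀ μ₀ k ρ‖ ≤ C) ∧
    Filter.Tendsto (fun ρ : ℝ => t2' n ω ε₀ μ₀ k ρ) (nhdsWithin 0 (Set.Ioi 0))
      (nhds (-(sbh n ((k * ω : ℝ) : ℂ)) / sbj n ((k * ω : ℝ) : ℂ))) ∧
    Filter.Tendsto (fun ρ : ℝ => t4' n ω ε₀ μ₀ k ρ) (nhdsWithin 0 (Set.Ioi 0))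
      (nhds (-(sbh n ((k * ω : ℝ) : ℂ)) / sbj n ((k * ω : ℝ) : ℂ))) :=
  source_transmission_ratios_asymptotics_general ω ε₀ μ₀ hε hμ n hn k hjk
end
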